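/- (a) For every a ∈ A, the element (ρ_A a, σ(c₁ a)∘c₀) belongs to L. (b) For all (v,α) ∈ L and b ∈ B, one has (−α + σ(b)∘c₀)∘ρ_A = (a ↦ σ(c₁ a)(c₀ v − ρ_B b)) as elements of A*; equivalently, the diagram with top row A → L × B → W given by a ↦ ((ρ_A a, σ(c₁ a)∘c₀), c₁ a) and ((v,α),b) ↦ c₀ v − ρ_B b, bottom row 0 → V* → A* given by β ↦ β∘ρ_A, and vertical maps ((v,α),b) ↦ −α + σ(b)∘c₀ and w ↦ (a ↦ σ(c₁ a)(w)), is a commuting chain map. (Linear core of the lemma constructing the tangent chain map of a 1-shifted coisotropic.) -/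
import Mathlib


/-- A subspace `L ⊆ V × V*` is Lagrangian if it equals its orthogonal
complement with respect to the symmetric pairing
`⟨(v,α),(w,β)⟩ = α(w) + β(v)`. -/
def IsLagrangian {V : Type*} [AddCommGroup V] [Module ℝ V]
    (L : Submodule ℝ (V × Module.Dual ℝ V)) : Prop :=
  ∀ x : V × Module.Dual ℝ V, x ∈ L ↔ ∀ y ∈ L, x.2 y.1 + y.2 x.1 = 0

/-- Linear core of the lemma constructing the tangent chain map of a
1-shifted coisotropic: (a) `(ρ_A a, σ(c₁ a)∘c₀) ∈ L` for every `a ∈ A`, and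
(b) `(−α + σ(b)∘c₀)∘ρ_A = (a ↦ σ(c₁ a)(c₀ v − ρ_B b))` for all `(v,α) ∈ L`
and `b ∈ B`, i.e. the square of the chain map commutes. -/
theorem chain_map_of_one_shifted_coisotropic
    {A B V W : Type*}
    [AddCommGroup A] [Module ℝ A] [FiniteDimensional ℝ A]
    [AddCommGroup B] [Module ℝ B] [FiniteDimensional ℝ B]
    [AddCommGroup V] [Module ℝ V] [FiniteDimensional ℝ V]
    [AddCommGroup W] [Module ℝ W] [FiniteDimensional ℝ W]
    (ρA : A →ₗ[ℝ] V) (ρB : B →ₗ[ℝ] W) (σ : B →ₗ[ℝ] Module.Dual ℝ W)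
    (c₀ : V →ₗ[ℝ] W) (c₁ : A →ₗ[ℝ] B)
    (hC : c₀ ∘ₗ ρA = ρB ∘ₗ c₁)
    (hH1 : ∀ b b' : B, σ b (ρB b') + σ b' (ρB b) = 0)
    (L : Submodule ℝ (V × Module.Dual ℝ V)) (hL : IsLagrangian L)
    (hM : ∀ (a : A) (v : V) (α : Module.Dual ℝ V), (v, α) ∈ L →
      α (ρA a) + σ (c₁ a) (c₀ v) = 0) :
    (∀ a : A, (ρA a, σ (c₁ a) ∘ₗ c₀) ∈ L) ∧
    (∀ (v : V) (α : Module.Dual ℝ V), (v, α) ∈ L → ∀ (b : B) (a : A),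
      (-α + σ b ∘ₗ c₀) (ρA a) = σ (c₁ a) (c₀ v - ρB b)) := by
  constructor
  · intro a
    rw [hL]
    rintro ⟨w, β⟩ hwb
    have := hM a w β hwb
    simp only [LinearMap.comp_apply]
    linarith [this]
  · intro v α hvα b a
    have h1 := hM a v α hvα
    have h2 := hH1 b (c₁ a)
    have h3 : c₀ (ρA a) = ρB (c₁ a) := LinearMap.congr_fun hC a
    simp only [LinearMap.add_apply, LinearMap.neg_apply, LinearMap.comp_apply, h3, map_sub]
    linarith
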